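/- The causal Bellman lower-bound operator 𝒯 defined by (𝒯 W)(s,x) = μ(¬x|s)·(a + γ·min_{s*} Σ_{x*} π(x*|s*) W(s*,x*)) + μ(x|s)·(R̃(s,x) + γ·Σ_{s'} T̃(s,x,s')·Σ_{x*} π(x*|s') W(s',x*)) is a γ-contraction on the space of bounded functions W : S × X → ℝ equipped with the sup norm, for any fixed policy π, behavioral distribution μ, nominal reward R̃, nominal transition T̃, and discount γ ∈ [0,1). -/
import Mathlib


open Finset

/-- The causal Bellman lower-bound operator is a `γ`-contraction on the
space of (automatically bounded) functions `W : S × X → ℝ` with the sup norm. -/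
theorem causal_bellman_operator_contraction
    {S X : Type*} [Fintype S] [Fintype X] [Nonempty S] [Nonempty X]
    (γ a : ℝ) (hγ0 : 0 ≤ γ) (hγ1 : γ < 1)
    (μ : S → X → ℝ) (hμ0 : ∀ s x, 0 ≤ μ s x) (hμ1 : ∀ s, ∑ x, μ s x = 1)
    (hμle : ∀ s x, μ s x ≤ 1)
    (π : S → X → ℝ) (hπ0 : ∀ s x, 0 ≤ π s x) (hπ1 : ∀ s, ∑ x, π s x = 1)
    (Ttil : S → X → S → ℝ) (hT0 : ∀ s x s', 0 ≤ Ttil s x s')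
    (hT1 : ∀ s x, ∑ s', Ttil s x s' = 1)
    (Rtil : S → X → ℝ)
    (T : (S → X → ℝ) → (S → X → ℝ))
    (hT : ∀ W s x, T W s x =
      (1 - μ s x) * (a + γ * univ.inf' univ_nonempty
          (fun s' => ∑ x', π s' x' * W s' x')) +
      μ s x * (Rtil s x + γ * ∑ s', Ttil s x s' *
          ∑ x', π s' x' * W s' x')) :
    ∀ W₁ W₂ : S → X → ℝ,
      (univ : Finset (S × X)).sup' univ_nonempty
          (fun p => |T W₁ p.1 p.2 - T W₂ p.1 p.2|) ≤
        γ * (univ : Finset (S × X)).sup' univ_nonempty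
          (fun p => |W₁ p.1 p.2 - W₂ p.1 p.2|) := by
  intro W₁ W₂
  set M := (univ : Finset (S × X)).sup' univ_nonempty
      (fun p => |W₁ p.1 p.2 - W₂ p.1 p.2|) with hMdef
  have hWle : ∀ s x, |W₁ s x - W₂ s x| ≤ M := fun s x =>
    Finset.le_sup' (f := fun p : S × X => |W₁ p.1 p.2 - W₂ p.1 p.2|) (Finset.mem_univ (s, x))
  have hM0 : 0 ≤ M :=
    le_trans (abs_nonneg _) (hWle (Classical.arbitrary S) (Classical.arbitrary X))
  set f := fun s' => ∑ x', π s' x' * W₁ s' x' with hf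
  set g := fun s' => ∑ x', π s' x' * W₂ s' x' with hg
  have havg : ∀ s', |f s' - g s'| ≤ M := by
    intro s'
    rw [hf, hg]
    rw [← Finset.sum_sub_distrib]
    calc |∑ x', (π s' x' * W₁ s' x' - π s' x' * W₂ s' x')|
        ≤ ∑ x', |π s' x' * W₁ s' x' - π s' x' * W₂ s' x'| := Finset.abs_sum_le_sum_abs _ _
      _ = ∑ x', π s' x' * |W₁ s' x' - W₂ s' x'| := by
          refine Finset.sum_congr rfl fun x' _ => ?_
          rw [← mul_sub, abs_mul, abs_of_nonneg (hπ0 s' x')]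
      _ ≤ ∑ x', π s' x' * M :=
          Finset.sum_le_sum fun x' _ => mul_le_mul_of_nonneg_left (hWle s' x') (hπ0 s' x')
      _ = M := by rw [← Finset.sum_mul, hπ1, one_mul]
  have hinf : |univ.inf' univ_nonempty f - univ.inf' univ_nonempty g| ≤ M := by
    rw [abs_sub_le_iff]
    constructor
    · obtain ⟨s', _, hs'⟩ := Finset.exists_mem_eq_inf' (univ_nonempty) g
      have h1 := Finset.inf'_le f (Finset.mem_univ s')
      have h2 := (abs_sub_le_iff.mp (havg s')).1
      rw [hs']; linarith
    · obtain ⟨s', _, hs'⟩ := Finset.exists_mem_eq_inf' (univ_nonempty) f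
      have h1 := Finset.inf'_le g (Finset.mem_univ s')
      have h2 := (abs_sub_le_iff.mp (havg s')).2
      rw [hs']; linarith
  have htrans : ∀ s x, |(∑ s', Ttil s x s' * f s') - ∑ s', Ttil s x s' * g s'| ≤ M := by
    intro s x
    rw [← Finset.sum_sub_distrib]
    calc |∑ s', (Ttil s x s' * f s' - Ttil s x s' * g s')|
        ≤ ∑ s', |Ttil s x s' * f s' - Ttil s x s' * g s'| := Finset.abs_sum_le_sum_abs _ _
      _ = ∑ s', Ttil s x s' * |f s' - g s'| := by
          refine Finset.sum_congr rfl fun s' _ => ?_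
          rw [← mul_sub, abs_mul, abs_of_nonneg (hT0 s x s')]
      _ ≤ ∑ s', Ttil s x s' * M :=
          Finset.sum_le_sum fun s' _ => mul_le_mul_of_nonneg_left (havg s') (hT0 s x s')
      _ = M := by rw [← Finset.sum_mul, hT1, one_mul]
  refine Finset.sup'_le _ _ fun p _ => ?_
  obtain ⟨s, x⟩ := p
  have key : T W₁ s x - T W₂ s x =
      (1 - μ s x) * (γ * (univ.inf' univ_nonempty f - univ.inf' univ_nonempty g)) +
      μ s x * (γ * ((∑ s', Ttil s x s' * f s') - ∑ s', Ttil s x s' * g s')) := by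
    rw [hT, hT, hf, hg]; ring
  have hμ0' := hμ0 s x
  have hμle' := hμle s x
  calc |T W₁ s x - T W₂ s x|
      ≤ |(1 - μ s x) * (γ * (univ.inf' univ_nonempty f - univ.inf' univ_nonempty g))| +
        |μ s x * (γ * ((∑ s', Ttil s x s' * f s') - ∑ s', Ttil s x s' * g s'))| := by
        rw [key]; exact abs_add_le _ _
    _ = (1 - μ s x) * (γ * |univ.inf' univ_nonempty f - univ.inf' univ_nonempty g|) +
        μ s x * (γ * |(∑ s', Ttil s x s' * f s') - ∑ s', Ttil s x s' * g s'|) := by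
        rw [abs_mul, abs_mul, abs_mul, abs_mul, abs_of_nonneg hγ0,
          abs_of_nonneg hμ0', abs_of_nonneg (by linarith : (0:ℝ) ≤ 1 - μ s x)]
    _ ≤ (1 - μ s x) * (γ * M) + μ s x * (γ * M) := by
        have := hinf
        have := htrans s x
        have hγM : 0 ≤ γ * M := mul_nonneg hγ0 hM0
        exact add_le_add
          (mul_le_mul_of_nonneg_left (mul_le_mul_of_nonneg_left hinf hγ0) (by linarith))
          (mul_le_mul_of_nonneg_left (mul_le_mul_of_nonneg_left (htrans s x) hγ0) hμ0')
    _ = γ * M := by ring
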